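/- (Square-sum bound for lacunary Walsh coefficients of L^p functions) Let 1 < p < ∞ and q > 1. There exists a constant C = C(p,q) > 0 such that for every q-lacunary sequence (w_{n_k}) of Walsh functions and every f ∈ L^p([0,1]), (Σ_{k≥1} (∫_0^1 f w_{n_k} dm)²)^{1/2} ≤ C · ‖f‖_{L^p([0,1])}. -/

import Mathlib

/-!
Write `c_k = ∫ f w_{n_k}`. Choosing `d` with `q ^ d ≥ 2`, each residue class `k ≡ r (mod d)`
is a `2`-lacunary subsequence, so it suffices to treat `2`-lacunary sequences (at the cost of a
factor `√d`).

Almost everywhere `w_a w_b = w_{a XOR b}`, and the XOR of finitely many, but at least one, terms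
of a `2`-lacunary sequence is nonzero: the largest term carries a binary digit that no other term
reaches. Since `∫₀¹ w_m = 0` for `m ≠ 0` (as `w_{2j}(t) = w_j(2t)` and `w_{2j+1}` changes sign
under `t ↦ t + 1/2`), a product `∏ w_{n_k}^{e_k}` integrates to `1` if every `e_k` is even and
to `0` otherwise, exactly as for independent random signs. The multinomial expansion then gives
Khintchine's inequality `∫ (∑ b_k w_{n_k})^{2m} ≤ m^m (∑ b_k²)^m`, and testing `f` against `g = ∑ c_k w_{n_k} / ‖c‖₂`
with Hölder's inequality for the exponent conjugate to `p` yields `‖c‖₂ ≤ K_p ‖f‖_p`.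
-/

open MeasureTheory Real Set Filter

/-- The Rademacher functions `r_k(t) = sign (sin (2^k π t))`. -/
noncomputable def rademacher (k : ℕ) (t : ℝ) : ℝ :=
  Real.sign (Real.sin (2 ^ k * Real.pi * t))

/-- The Walsh functions in Paley's numbering: `w_k = ∏ r_{i+1}^{bit_i(k)}`. -/
noncomputable def walsh (k : ℕ) (t : ℝ) : ℝ :=
  ∏ i ∈ Finset.range k, if Nat.testBit k i then rademacher (i + 1) t else 1

/-- A sequence `(w_{n k})` of Walsh functions is `q`-lacunary if the `n k` are
positive integers and `n (k+1) / n k ≥ q` for all `k`. -/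
def WalshLacunary (q : ℝ) (n : ℕ → ℕ) : Prop :=
  (∀ k, 1 ≤ n k) ∧ ∀ k, q * (n k : ℝ) ≤ (n (k + 1) : ℝ)

/-- The `L^p` norm of a function on `[0,1]`. -/
noncomputable def lpNorm (p : ℝ) (f : ℝ → ℝ) : ℝ :=
  (∫ t in Set.Icc (0:ℝ) 1, |f t| ^ p) ^ (1 / p)

lemma Function.Antiperiodic.intervalIntegral_add_two_mul_eq_zero {f : ℝ → ℝ} {c : ℝ}
    (hf : Function.Antiperiodic f c) (hint : ∀ a b, IntervalIntegrable f volume a b) (a : ℝ) :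
    ∫ x in a..a + 2 * c, f x = 0 := by
  have hshift : ∫ x in a + c..a + 2 * c, f x = -∫ x in a..a + c, f x := by
    rw [← intervalIntegral.integral_neg, two_mul, ← add_assoc]
    simp only [← hf _, intervalIntegral.integral_comp_add_right]
  rw [← intervalIntegral.integral_add_adjacent_intervals (hint a (a + c)) (hint _ _), hshift,
    add_neg_cancel]

lemma abs_rpow_le_one_add_pow (x : ℝ) {P : ℝ} {m : ℕ} (hP : 0 ≤ P) (hPm : P ≤ 2 * m) :
    |x| ^ P ≤ 1 + x ^ (2 * m) := by
  have hpow : 0 ≤ x ^ (2 * m) := (even_two_mul m).pow_nonneg x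
  rcases le_or_gt |x| 1 with hx | hx
  · linarith [Real.rpow_le_one (abs_nonneg x) hx hP]
  · calc |x| ^ P ≤ |x| ^ ((2 * m : ℕ) : ℝ) :=
          Real.rpow_le_rpow_of_exponent_le hx.le (by simpa using hPm)
      _ = x ^ (2 * m) := by rw [Real.rpow_natCast, (even_two_mul m).pow_abs]
      _ ≤ 1 + x ^ (2 * m) := le_add_of_nonneg_left zero_le_one

lemma integral_mul_le_Lp_mul_Lq {α : Type*} [MeasurableSpace α] {μ : Measure α} {f g : α → ℝ}
    {p q : ℝ} (hpq : p.HolderConjugate q) (hf : MemLp f (ENNReal.ofReal p) μ)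
    (hg : MemLp g (ENNReal.ofReal q) μ) :
    ∫ a, f a * g a ∂μ ≤ (∫ a, |f a| ^ p ∂μ) ^ (1 / p) * (∫ a, |g a| ^ q ∂μ) ^ (1 / q) := by
  calc ∫ a, f a * g a ∂μ ≤ ∫ a, ‖f a‖ * ‖g a‖ ∂μ := by
        simpa only [norm_mul] using
          (le_abs_self _).trans (norm_integral_le_integral_norm fun a => f a * g a)
    _ ≤ _ := by simpa only [Real.norm_eq_abs] using integral_mul_norm_le_Lp_mul_Lq hpq hf hg

lemma Finset.sum_range_mul_eq_sum_sum {M : Type*} [AddCommMonoid M] (a : ℕ → M) (d N : ℕ) :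
    ∑ k ∈ range (d * N), a k = ∑ j ∈ range N, ∑ r ∈ range d, a (d * j + r) := by
  induction N with
  | zero => simp
  | succ N ih => rw [Nat.mul_succ, Finset.sum_range_add, ih, Finset.sum_range_succ]

lemma abs_sum_mul_le_sum_abs {Ω ι : Type*} {φ : ι → Ω → ℝ} (s : Finset ι)
    (hφb : ∀ k ω, |φ k ω| ≤ 1) (b : ι → ℝ) (ω : Ω) :
    |∑ k ∈ s, b k * φ k ω| ≤ ∑ k ∈ s, |b k| := by
  refine (Finset.abs_sum_le_sum_abs _ _).trans (Finset.sum_le_sum fun k _ => ?_)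
  simpa [abs_mul] using mul_le_mul_of_nonneg_left (hφb k ω) (abs_nonneg (b k))

section RademacherMoments

variable {Ω ι : Type*} [MeasurableSpace Ω] {μ : Measure Ω} {φ : ι → Ω → ℝ} {s : Finset ι}

def HasRademacherMoments (μ : Measure Ω) (φ : ι → Ω → ℝ) (s : Finset ι) : Prop :=
  ∀ e : ι → ℕ, ∫ ω, ∏ k ∈ s, φ k ω ^ e k ∂μ = if ∀ k ∈ s, Even (e k) then 1 else 0

noncomputable def khintchineConst (P : ℝ) : ℝ := (1 + (⌈P⌉₊ : ℝ) ^ ⌈P⌉₊) ^ (1 / P)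

lemma khintchineConst_pos (P : ℝ) : 0 < khintchineConst P := by
  unfold khintchineConst; positivity

lemma integral_sum_mul_pow_le [IsFiniteMeasure μ] (hφm : ∀ k, AEStronglyMeasurable (φ k) μ)
    (hφb : ∀ k ω, |φ k ω| ≤ 1) (hφ : HasRademacherMoments μ φ s) (b : ι → ℝ) (m : ℕ) :
    ∫ ω, (∑ k ∈ s, b k * φ k ω) ^ (2 * m) ∂μ ≤ (m : ℝ) ^ m * (∑ k ∈ s, b k ^ 2) ^ m := by
  classical
  have hint : ∀ e : ι → ℕ, Integrable (fun ω => ∏ k ∈ s, φ k ω ^ e k) μ := fun e =>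
    .of_bound (Finset.aestronglyMeasurable_fun_prod s fun k _ => (hφm k).pow _) 1 <|
      ae_of_all _ fun ω => by
        simpa [Finset.abs_prod] using Finset.prod_le_one (fun _ _ => by positivity)
          (fun k _ => pow_le_one₀ (abs_nonneg _) (hφb k ω))
  have hexpand : ∀ ω, (∑ k ∈ s, b k * φ k ω) ^ (2 * m) = ∑ e ∈ s.piAntidiag (2 * m),
      (Nat.multinomial s e * ∏ k ∈ s, b k ^ e k) * ∏ k ∈ s, φ k ω ^ e k := fun ω => by
    simp only [Finset.sum_pow_eq_sum_piAntidiag, mul_pow, Finset.prod_mul_distrib, mul_assoc]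
  have hdouble : ∀ e : ι → ℕ, (∀ k ∈ s, Even (e k)) ↔ ∀ k ∈ s, 2 ∣ e k := fun e => by
    simp only [even_iff_two_dvd]
  -- After integration only the exponent vectors `e = 2 • f` survive.
  calc ∫ ω, (∑ k ∈ s, b k * φ k ω) ^ (2 * m) ∂μ
      = ∑ e ∈ (s.piAntidiag m).map ⟨(2 • ·), nsmul_right_injective two_ne_zero⟩,
          Nat.multinomial s e * ∏ k ∈ s, b k ^ e k := by
        rw [Finset.map_nsmul_piAntidiag s m two_ne_zero, Finset.sum_filter]
        simp only [hexpand, integral_finsetSum _ fun e _ => (hint e).const_mul _,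
          integral_const_mul, hφ _, hdouble, mul_ite, mul_one, mul_zero]
    _ = ∑ f ∈ s.piAntidiag m, Nat.multinomial s (2 • f) * ∏ k ∈ s, (b k ^ 2) ^ f k := by
        simp only [Finset.sum_map, Function.Embedding.coeFn_mk, Pi.smul_apply, smul_eq_mul,
          pow_mul]
    _ ≤ ∑ f ∈ s.piAntidiag m, (m : ℝ) ^ m * (Nat.multinomial s f * ∏ k ∈ s, (b k ^ 2) ^ f k) := by
        refine Finset.sum_le_sum fun f hf => ?_
        rw [← mul_assoc]
        gcongr
        exact_mod_cast (Finset.mem_piAntidiag.mp hf).1 ▸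
          Nat.multinomial_two_mul_le_mul_multinomial (s := s) (f := f)
    _ = (m : ℝ) ^ m * (∑ k ∈ s, b k ^ 2) ^ m := by
        rw [← Finset.mul_sum, Finset.sum_pow_eq_sum_piAntidiag]

lemma rpow_integral_abs_sum_mul_rpow_le [IsProbabilityMeasure μ]
    (hφm : ∀ k, AEStronglyMeasurable (φ k) μ) (hφb : ∀ k ω, |φ k ω| ≤ 1)
    (hφ : HasRademacherMoments μ φ s) {b : ι → ℝ} (hb : ∑ k ∈ s, b k ^ 2 = 1) {P : ℝ}
    (hP : 0 ≤ P) :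
    (∫ ω, |∑ k ∈ s, b k * φ k ω| ^ P ∂μ) ^ (1 / P) ≤ khintchineConst P := by
  set m := ⌈P⌉₊
  have hPm : P ≤ 2 * m := by linarith [Nat.le_ceil P, (Nat.cast_nonneg m : (0 : ℝ) ≤ m)]
  have hpow_int : Integrable (fun ω => (∑ k ∈ s, b k * φ k ω) ^ (2 * m)) μ :=
    .of_bound ((Finset.aestronglyMeasurable_fun_sum s fun k _ => (hφm k).const_mul _).pow _) _
      (ae_of_all _ fun ω => by
        simpa only [norm_pow, Real.norm_eq_abs] using
          (pow_le_pow_left₀ (abs_nonneg _) (abs_sum_mul_le_sum_abs s hφb b ω) (2 * m)))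
  refine Real.rpow_le_rpow (by positivity) ?_ (by positivity)
  calc ∫ ω, |∑ k ∈ s, b k * φ k ω| ^ P ∂μ
      ≤ ∫ ω, (1 + (∑ k ∈ s, b k * φ k ω) ^ (2 * m)) ∂μ :=
        integral_mono_of_nonneg (ae_of_all _ fun _ => by positivity)
          ((integrable_const 1).add hpow_int)
          (ae_of_all _ fun ω => abs_rpow_le_one_add_pow _ hP hPm)
    _ = 1 + ∫ ω, (∑ k ∈ s, b k * φ k ω) ^ (2 * m) ∂μ := by
        rw [integral_add (integrable_const 1) hpow_int, integral_const, probReal_univ, one_smul]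
    _ ≤ 1 + (m : ℝ) ^ m := by
        simpa [hb] using integral_sum_mul_pow_le hφm hφb hφ b m

lemma sum_sq_integral_mul_le [IsProbabilityMeasure μ]
    (hφm : ∀ k, AEStronglyMeasurable (φ k) μ) (hφb : ∀ k ω, |φ k ω| ≤ 1)
    (hφ : HasRademacherMoments μ φ s) {p : ℝ} (hp : 1 < p) {f : Ω → ℝ}
    (hf : MemLp f (ENNReal.ofReal p) μ) :
    ∑ k ∈ s, (∫ ω, f ω * φ k ω ∂μ) ^ 2 ≤
      (khintchineConst p.conjExponent * (∫ ω, |f ω| ^ p ∂μ) ^ (1 / p)) ^ 2 := by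
  set c := fun k => ∫ ω, f ω * φ k ω ∂μ
  set A := ∑ k ∈ s, c k ^ 2
  set P := p.conjExponent
  have hpP : p.HolderConjugate P := .conjExponent hp
  have hA0 : 0 ≤ A := Finset.sum_nonneg fun k _ => sq_nonneg (c k)
  rcases hA0.eq_or_lt with hA | hA
  · rw [← hA]; positivity
  set b := fun k => c k / √A
  have hb : ∑ k ∈ s, b k ^ 2 = 1 := by
    simp only [b, div_pow, ← Finset.sum_div, Real.sq_sqrt hA0]
    exact div_self hA.ne'
  set g := fun ω => ∑ k ∈ s, b k * φ k ω
  have hg : MemLp g (ENNReal.ofReal P) μ :=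
    .of_bound (Finset.aestronglyMeasurable_fun_sum s fun k _ => (hφm k).const_mul _) _
      (ae_of_all _ (abs_sum_mul_le_sum_abs s hφb b))
  have hfφ : ∀ k, Integrable (fun ω => f ω * φ k ω) μ := fun k =>
    (hf.integrable (by simpa using hp.le)).mul_bdd (hφm k) (ae_of_all _ fun ω => hφb k ω)
  have hfg : ∫ ω, f ω * g ω ∂μ = √A := by
    calc ∫ ω, f ω * g ω ∂μ = ∑ k ∈ s, b k * c k := by
          simp only [g, Finset.mul_sum, mul_left_comm (f _)]
          rw [integral_finsetSum _ fun k _ => (hfφ k).const_mul _]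
          simp only [integral_const_mul, c]
      _ = A / √A := by simp only [b, A, Finset.sum_div, div_mul_eq_mul_div, sq]
      _ = √A := div_sqrt
  have hsqrt : √A ≤ (∫ ω, |f ω| ^ p ∂μ) ^ (1 / p) * khintchineConst P :=
    hfg ▸ (integral_mul_le_Lp_mul_Lq hpP hf hg).trans
      (by gcongr; exact rpow_integral_abs_sum_mul_rpow_le hφm hφb hφ hb hpP.symm.nonneg)
  calc A = √A ^ 2 := (Real.sq_sqrt hA0).symm
    _ ≤ _ := by rw [mul_comm]; gcongr

end RademacherMoments

lemma measurable_rademacher (k : ℕ) : Measurable (rademacher k) := by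
  have hsign : Measurable Real.sign := by
    have : Real.sign = fun x => if x < 0 then -1 else if 0 < x then 1 else 0 := by
      ext x; rfl
    rw [this]
    exact measurable_const.ite measurableSet_Iio
      (measurable_const.ite measurableSet_Ioi measurable_const)
  exact hsign.comp (Real.continuous_sin.measurable.comp (measurable_id.const_mul _))

lemma abs_rademacher_le_one (k : ℕ) (t : ℝ) : |rademacher k t| ≤ 1 := by
  rcases Real.sign_apply_eq (Real.sin (2 ^ k * π * t)) with h | h | h <;>
    simp [rademacher, h]

lemma rademacher_succ (i : ℕ) (t : ℝ) : rademacher (i + 1) t = rademacher i (2 * t) := by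
  simp only [rademacher]
  ring_nf

lemma rademacher_succ_periodic (i : ℕ) : Function.Periodic (rademacher (i + 1)) 1 := by
  intro t
  have : 2 ^ (i + 1) * π * (t + 1) = 2 ^ (i + 1) * π * t + (2 ^ i : ℕ) * (2 * π) := by
    push_cast; ring
  simp only [rademacher, this, Real.sin_add_nat_mul_two_pi]

lemma rademacher_one_antiperiodic : Function.Antiperiodic (rademacher 1) (1 / 2) := by
  intro t
  have : 2 ^ 1 * π * (t + 1 / 2) = 2 ^ 1 * π * t + π := by ring
  simp only [rademacher, this, Real.sin_add_pi, Real.sign_neg]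

lemma ae_rademacher_sq_eq_one : ∀ᵐ t, ∀ i, rademacher i t ^ 2 = 1 := by
  refine ae_all_iff.mpr fun i => ?_
  have hzeros : {t : ℝ | Real.sin (2 ^ i * π * t) = 0}.Countable := by
    refine (Set.countable_range fun m : ℤ => (m : ℝ) / 2 ^ i).mono fun t ht => ?_
    obtain ⟨m, hm⟩ := Real.sin_eq_zero_iff.mp ht
    have : (m : ℝ) = 2 ^ i * t := mul_right_cancel₀ Real.pi_ne_zero (by rw [hm]; ring)
    exact ⟨m, by simp [this]⟩
  filter_upwards [hzeros.ae_notMem volume] with t ht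
  rcases Real.sign_apply_eq_of_ne_zero _ ht with h | h <;> simp [rademacher, h]

lemma walsh_eq_prod_range {k K : ℕ} (hk : k < 2 ^ K) (t : ℝ) :
    walsh k t = ∏ i ∈ Finset.range K, if k.testBit i then rademacher (i + 1) t else 1 := by
  have extend : ∀ {K K'}, K ≤ K' → k < 2 ^ K →
      ∏ i ∈ Finset.range K, (if k.testBit i then rademacher (i + 1) t else 1) =
        ∏ i ∈ Finset.range K', if k.testBit i then rademacher (i + 1) t else 1 := by
    intro K K' hKK' hk
    refine Finset.prod_subset (Finset.range_subset_range.mpr hKK') fun i _ hi => ?_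
    rw [Nat.testBit_lt_two_pow (hk.trans_le (Nat.pow_le_pow_right two_pos (by simpa using hi)))]
    rfl
  rw [walsh, extend (le_max_left k K) Nat.lt_two_pow_self, extend (le_max_right k K) hk]

lemma walsh_zero : walsh 0 = 1 := by
  ext t; simp [walsh]

lemma measurable_walsh (k : ℕ) : Measurable (walsh k) := by
  refine Finset.measurable_prod _ fun i _ => ?_
  split_ifs
  exacts [measurable_rademacher _, measurable_const]

lemma abs_walsh_le_one (k : ℕ) (t : ℝ) : |walsh k t| ≤ 1 := by
  rw [walsh, Finset.abs_prod]
  refine Finset.prod_le_one (fun _ _ => abs_nonneg _) fun i _ => ?_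
  split_ifs
  exacts [abs_rademacher_le_one _ _, abs_one.le]

lemma walsh_bit (b : Bool) (k : ℕ) (t : ℝ) :
    walsh (Nat.bit b k) t = (if b then rademacher 1 t else 1) * walsh k (2 * t) := by
  have hk : k < 2 ^ k := Nat.lt_two_pow_self
  rw [walsh_eq_prod_range (Nat.bit_lt_two_pow_succ_iff.mpr hk), walsh_eq_prod_range hk,
    Finset.prod_range_succ', mul_comm]
  simp only [Nat.testBit_bit_zero, Nat.testBit_bit_succ, rademacher_succ (_ + 1)]

lemma walsh_periodic (k : ℕ) : Function.Periodic (walsh k) 1 := by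
  intro t
  simp only [walsh, rademacher_succ_periodic _ t]

lemma intervalIntegrable_walsh (k : ℕ) (a b : ℝ) : IntervalIntegrable (walsh k) volume a b :=
  (intervalIntegrable_const (c := (1 : ℝ))).mono_fun (measurable_walsh k).aestronglyMeasurable
    (ae_of_all _ fun t => by simpa using abs_walsh_le_one k t)

lemma integral_walsh_eq_zero {k : ℕ} (hk : k ≠ 0) : ∫ t in (0 : ℝ)..1, walsh k t = 0 := by
  induction k using Nat.binaryRec with
  | zero => exact absurd rfl hk
  | bit b j ih =>
    cases b with
    | true =>
      have hanti : Function.Antiperiodic (walsh (Nat.bit true j)) (1 / 2) := fun t => by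
        simp only [walsh_bit, if_true, rademacher_one_antiperiodic t, mul_add,
          show 2 * (1 / 2 : ℝ) = 1 by norm_num, walsh_periodic j (2 * t), neg_mul]
      simpa using hanti.intervalIntegral_add_two_mul_eq_zero (intervalIntegrable_walsh _) 0
    | false =>
      have hj : j ≠ 0 := by rintro rfl; exact hk rfl
      simp only [walsh_bit, Bool.false_eq_true, if_false, one_mul]
      rw [intervalIntegral.integral_comp_mul_left _ two_ne_zero, mul_zero, mul_one,
        show (2 : ℝ) = 1 + 1 by norm_num, ← intervalIntegral.integral_add_adjacent_intervals
          (intervalIntegrable_walsh _ _ _) (intervalIntegrable_walsh _ _ _),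
        (walsh_periodic j).intervalIntegral_add_eq 1 0, zero_add, ih hj]
      simp

lemma setIntegral_Icc_walsh (k : ℕ) :
    ∫ t in Set.Icc (0 : ℝ) 1, walsh k t = if k = 0 then 1 else 0 := by
  split_ifs with hk
  · simp [hk, walsh_zero]
  · rw [integral_Icc_eq_integral_Ioc, ← intervalIntegral.integral_of_le zero_le_one,
      integral_walsh_eq_zero hk]

lemma walsh_mul_walsh {t : ℝ} (ht : ∀ i, rademacher i t ^ 2 = 1) (x y : ℕ) :
    walsh x t * walsh y t = walsh (x ^^^ y) t := by
  have hlt : ∀ {z}, z ≤ max x y → z < 2 ^ max x y := fun hz =>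
    hz.trans_lt Nat.lt_two_pow_self
  rw [walsh_eq_prod_range (hlt (le_max_left x y)), walsh_eq_prod_range (hlt (le_max_right x y)),
    walsh_eq_prod_range (Nat.xor_lt_two_pow (hlt (le_max_left x y)) (hlt (le_max_right x y))),
    ← Finset.prod_mul_distrib]
  refine Finset.prod_congr rfl fun i _ => ?_
  rw [Nat.testBit_xor]
  cases x.testBit i <;> cases y.testBit i <;> simp [← sq, ht]

lemma walsh_pow {t : ℝ} (ht : ∀ i, rademacher i t ^ 2 = 1) (k e : ℕ) :
    walsh k t ^ e = if Even e then 1 else walsh k t := by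
  have hsq : walsh k t ^ 2 = 1 := by
    rw [sq, walsh_mul_walsh ht, Nat.xor_self, walsh_zero]; rfl
  split_ifs with he
  · obtain ⟨c, rfl⟩ := he
    rw [← two_mul, pow_mul, hsq, one_pow]
  · obtain ⟨c, rfl⟩ := Nat.not_even_iff_odd.mp he
    rw [pow_succ, pow_mul, hsq, one_pow, one_mul]

-- `XorOp.xor` rather than `(· ^^^ ·)`: Mathlib's `Std.Commutative` and `Std.Associative`
-- instances, which `Finset.fold` needs, are stated for it.
lemma prod_walsh {ι : Type*} (s : Finset ι) (a : ι → ℕ) {t : ℝ}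
    (ht : ∀ i, rademacher i t ^ 2 = 1) :
    ∏ j ∈ s, walsh (a j) t = walsh (s.fold XorOp.xor 0 a) t := by
  induction s using Finset.cons_induction with
  | empty => simp [walsh_zero]
  | cons j s hj ih =>
    rw [Finset.prod_cons, ih, Finset.fold_cons]
    exact walsh_mul_walsh ht _ _

lemma fold_xor_lt_two_pow {ι : Type*} (s : Finset ι) {a : ι → ℕ} {T : ℕ}
    (h : ∀ j ∈ s, a j < 2 ^ T) : s.fold XorOp.xor 0 a < 2 ^ T := by
  induction s using Finset.cons_induction with
  | empty => exact Nat.two_pow_pos T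
  | cons j s hj ih =>
    rw [Finset.fold_cons]
    exact Nat.xor_lt_two_pow (h j (Finset.mem_cons_self j s))
      (ih fun i hi => h i (Finset.mem_cons_of_mem hi))

lemma WalshLacunary.two_mul_le_of_lt {n : ℕ → ℕ} (hn : WalshLacunary 2 n) {j k : ℕ}
    (hjk : j < k) : 2 * n j ≤ n k := by
  have hlac : ∀ k, 2 * n k ≤ n (k + 1) := fun k => by exact_mod_cast hn.2 k
  exact (hlac j).trans <| monotone_nat_of_le_succ
    (fun k => (Nat.le_mul_of_pos_left _ two_pos).trans (hlac k)) hjk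

lemma WalshLacunary.fold_xor_ne_zero {n : ℕ → ℕ} (hn : WalshLacunary 2 n) {s : Finset ℕ}
    (hs : s.Nonempty) : s.fold XorOp.xor 0 n ≠ 0 := by
  set a := s.max' hs
  set T := Nat.log 2 (n a)
  have hup : n a < 2 ^ T * 2 := pow_succ 2 T ▸ Nat.lt_pow_succ_log_self one_lt_two (n a)
  have hrest : (s.erase a).fold XorOp.xor 0 n < 2 ^ T := by
    refine fold_xor_lt_two_pow _ fun j hj => ?_
    have : 2 * n j ≤ n a := hn.two_mul_le_of_lt <|
      (s.le_max' j (Finset.mem_of_mem_erase hj)).lt_of_ne (Finset.ne_of_mem_erase hj)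
    omega
  rw [← Finset.insert_erase (s.max'_mem hs), Finset.fold_insert (Finset.notMem_erase a s)]
  change n a ^^^ _ ≠ 0
  rw [Ne, xor_eq_zero_iff]
  exact (hrest.trans_le (Nat.pow_log_le_self 2 (Nat.pos_iff_ne_zero.mp (hn.1 a)))).ne'

lemma hasRademacherMoments_walsh {n : ℕ → ℕ} (hn : WalshLacunary 2 n) (s : Finset ℕ) :
    HasRademacherMoments (volume.restrict (Set.Icc (0 : ℝ) 1)) (fun k => walsh (n k)) s := by
  intro e
  set odd := s.filter fun k => ¬Even (e k)
  have hprod : ∀ᵐ t ∂volume.restrict (Set.Icc (0 : ℝ) 1),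
      ∏ k ∈ s, walsh (n k) t ^ e k = walsh (odd.fold XorOp.xor 0 n) t := by
    filter_upwards [ae_restrict_of_ae ae_rademacher_sq_eq_one] with t ht
    rw [← prod_walsh _ _ ht, Finset.prod_filter]
    exact Finset.prod_congr rfl fun k _ => by rw [walsh_pow ht, ite_not]
  rw [integral_congr_ae hprod, setIntegral_Icc_walsh]
  by_cases heven : ∀ k ∈ s, Even (e k)
  · have hodd : odd = ∅ := Finset.filter_false_of_mem fun k hk => not_not.mpr (heven k hk)
    simpa [hodd]
  · have hodd : odd.Nonempty := by
      obtain ⟨k, hk, hke⟩ := not_forall₂.mp heven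
      exact ⟨k, Finset.mem_filter.mpr ⟨hk, hke⟩⟩
    simp [heven, hn.fold_xor_ne_zero hodd]

lemma WalshLacunary.sum_sq_integral_mul_walsh_le {n : ℕ → ℕ} (hn : WalshLacunary 2 n) {p : ℝ}
    (hp : 1 < p) {f : ℝ → ℝ}
    (hf : MemLp f (ENNReal.ofReal p) (volume.restrict (Set.Icc (0 : ℝ) 1))) (s : Finset ℕ) :
    ∑ k ∈ s, (∫ t in Set.Icc (0 : ℝ) 1, f t * walsh (n k) t) ^ 2 ≤
      (khintchineConst p.conjExponent * lpNorm p f) ^ 2 := by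
  have : IsProbabilityMeasure (volume.restrict (Set.Icc (0 : ℝ) 1)) := ⟨by simp⟩
  exact sum_sq_integral_mul_le (fun k => (measurable_walsh (n k)).aestronglyMeasurable)
    (fun k => abs_walsh_le_one (n k)) (hasRademacherMoments_walsh hn s) hp hf

lemma WalshLacunary.pow_mul_le {q : ℝ} {n : ℕ → ℕ} (hn : WalshLacunary q n) (hq : 0 ≤ q)
    (k e : ℕ) : q ^ e * n k ≤ n (k + e) := by
  induction e with
  | zero => simp
  | succ e ih =>
    calc q ^ (e + 1) * n k = q * (q ^ e * n k) := by ring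
      _ ≤ q * n (k + e) := mul_le_mul_of_nonneg_left ih hq
      _ ≤ n (k + (e + 1)) := hn.2 (k + e)

lemma WalshLacunary.comp_mul_add {q : ℝ} {n : ℕ → ℕ} (hn : WalshLacunary q n) (hq : 0 ≤ q)
    {d : ℕ} (hd : 2 ≤ q ^ d) (r : ℕ) : WalshLacunary 2 fun j => n (d * j + r) := by
  refine ⟨fun j => hn.1 _, fun j => ?_⟩
  calc 2 * (n (d * j + r) : ℝ) ≤ q ^ d * n (d * j + r) := by gcongr
    _ ≤ n (d * j + r + d) := hn.pow_mul_le hq _ d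
    _ = n (d * (j + 1) + r) := by ring_nf

/-- **Square-sum bound for lacunary Walsh coefficients of `L^p` functions**,
`1 < p < ∞`. -/
theorem walsh_coefficient_bound (p q : ℝ) (hp : 1 < p) (hq : 1 < q) :
    ∃ C : ℝ, 0 < C ∧
      ∀ n : ℕ → ℕ, WalshLacunary q n →
        ∀ f : ℝ → ℝ,
          MemLp f (ENNReal.ofReal p) (volume.restrict (Set.Icc (0:ℝ) 1)) →
          Summable (fun k => (∫ t in Set.Icc (0:ℝ) 1, f t * walsh (n k) t) ^ 2) ∧
          Real.sqrt (∑' k, (∫ t in Set.Icc (0:ℝ) 1, f t * walsh (n k) t) ^ 2) ≤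
            C * lpNorm p f := by
  obtain ⟨d, hd⟩ : ∃ d : ℕ, 2 < q ^ d := pow_unbounded_of_one_lt 2 hq
  have hd0 : 0 < d := Nat.pos_of_ne_zero (by rintro rfl; norm_num at hd)
  set K := khintchineConst p.conjExponent
  have hK : 0 < K := khintchineConst_pos _
  refine ⟨√d * K, by positivity, fun n hn f hf => ?_⟩
  set c := fun k => ∫ t in Set.Icc (0 : ℝ) 1, f t * walsh (n k) t
  have hpartial : ∀ N, ∑ k ∈ Finset.range N, c k ^ 2 ≤ d * (K * lpNorm p f) ^ 2 := fun N =>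
    calc ∑ k ∈ Finset.range N, c k ^ 2
        ≤ ∑ k ∈ Finset.range (d * N), c k ^ 2 :=
          Finset.sum_le_sum_of_subset_of_nonneg (Finset.range_subset_range.mpr
            (Nat.le_mul_of_pos_left N hd0)) fun k _ _ => sq_nonneg _
      _ = ∑ r ∈ Finset.range d, ∑ j ∈ Finset.range N, c (d * j + r) ^ 2 := by
          rw [Finset.sum_range_mul_eq_sum_sum, Finset.sum_comm]
      _ ≤ ∑ r ∈ Finset.range d, (K * lpNorm p f) ^ 2 := Finset.sum_le_sum fun r _ =>
          (hn.comp_mul_add (by linarith) hd.le r).sum_sq_integral_mul_walsh_le hp hf _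
      _ = d * (K * lpNorm p f) ^ 2 := by simp
  refine ⟨summable_of_sum_range_le (fun k => sq_nonneg _) hpartial, ?_⟩
  have hf_nonneg : 0 ≤ lpNorm p f := by unfold _root_.lpNorm; positivity
  calc √(∑' k, c k ^ 2) ≤ √(d * (K * lpNorm p f) ^ 2) :=
        Real.sqrt_le_sqrt (Real.tsum_le_of_sum_range_le (fun k => sq_nonneg _) hpartial)
    _ = √d * K * lpNorm p f := by
        rw [Real.sqrt_mul (Nat.cast_nonneg d), Real.sqrt_sq (by positivity), mul_assoc]
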